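/- Let v be any finite real linear combination of the vector fields F^l_k (−1 ≤ l ≤ k) and Θ^m_n (0 ≤ m ≤ n), and let g be a polynomial (or formal power series) with v(g) = 0. Then the vector field g·Θ^0_0 is a symmetry of v, i.e. [v, g·Θ^0_0] = 0, where Θ^0_0 = z ∂_y − y ∂_z. In particular, if f is a first integral of v then so is every power f^l, and [v, f^l Θ^0_0] = 0 for all l ≥ 0. -/
import Mathlib


noncomputable section
open MvPolynomial

/-- Polynomial functions of the variables x, y, z (indexed `0, 1, 2`). -/
abbrev Poly3 := MvPolynomial (Fin 3) ℝ

/-- Polynomial vector fields on ℝ³, given by their three components. -/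
abbrev VF3 := Fin 3 → Poly3

/-- The derivation action `v(g) = v₁ ∂g/∂x + v₂ ∂g/∂y + v₃ ∂g/∂z`. -/
def applyVF (v : VF3) (g : Poly3) : Poly3 := ∑ i, v i * pderiv i g

/-- The Lie bracket `[v,w] := v∘w − w∘v`, with i-th component `v(wᵢ) − w(vᵢ)`. -/
def bracket (v w : VF3) : VF3 := fun i => applyVF v (w i) - applyVF w (v i)

/-- The divergence `div v = ∂v₁/∂x + ∂v₂/∂y + ∂v₃/∂z`. -/
def divergence (v : VF3) : Poly3 := ∑ i, pderiv i (v i)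

/-- The vector field `F^l_k := x^l (y²+z²)^{k−l} ((k−l+1) x ∂_x − ((l+1)/2) y ∂_y − ((l+1)/2) z ∂_z)`
for integers `−1 ≤ l ≤ k`; for `l = −1` the second and third components vanish and this is
`(k+2)(y²+z²)^{k+1} ∂_x`. -/
def Fvf (l k : ℤ) : VF3 :=
  ![C ((k - l + 1 : ℤ) : ℝ) * X 0 ^ (l + 1).toNat * (X 1 ^ 2 + X 2 ^ 2) ^ (k - l).toNat,
    C (-((l + 1 : ℤ) : ℝ) / 2) * X 0 ^ l.toNat * X 1 * (X 1 ^ 2 + X 2 ^ 2) ^ (k - l).toNat,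
    C (-((l + 1 : ℤ) : ℝ) / 2) * X 0 ^ l.toNat * X 2 * (X 1 ^ 2 + X 2 ^ 2) ^ (k - l).toNat]

/-- The vector field `Θ^m_n := x^m (y²+z²)^{n−m} (z ∂_y − y ∂_z)` for integers `0 ≤ m ≤ n`. -/
def Tvf (m n : ℤ) : VF3 :=
  ![0,
    X 0 ^ m.toNat * (X 1 ^ 2 + X 2 ^ 2) ^ (n - m).toNat * X 2,
    -(X 0 ^ m.toNat * (X 1 ^ 2 + X 2 ^ 2) ^ (n - m).toNat * X 1)]

/-- Each `F^l_k` commutes with the rotation `Θ^0_0`. -/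
lemma brF (l k : ℤ) : bracket (Fvf l k) (Tvf 0 0) = 0 := by
  funext i
  fin_cases i <;>
    simp [bracket, applyVF, Fvf, Tvf, Fin.sum_univ_three, pderiv_mul, pderiv_pow,
      pderiv_X_self, pderiv_X_of_ne] <;> ring

/-- Each `Θ^m_n` commutes with the rotation `Θ^0_0`. -/
lemma brT (m n : ℤ) : bracket (Tvf m n) (Tvf 0 0) = 0 := by
  funext i
  fin_cases i <;>
    simp [bracket, applyVF, Tvf, Fin.sum_univ_three, pderiv_mul, pderiv_pow,
      pderiv_X_self, pderiv_X_of_ne] <;> ring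

lemma applyVF_sum_smul {ι : Type*} (s : Finset ι) (c : ι → ℝ) (u : ι → VF3) (g : Poly3) :
    applyVF (fun i => ∑ p ∈ s, c p • u p i) g = ∑ p ∈ s, c p • applyVF (u p) g := by
  simp only [applyVF, Finset.sum_mul, smul_mul_assoc, Finset.smul_sum]
  exact Finset.sum_comm

lemma applyVF_add_left (v w : VF3) (g : Poly3) :
    applyVF (fun i => v i + w i) g = applyVF v g + applyVF w g := by
  simp [applyVF, add_mul, Finset.sum_add_distrib]

lemma applyVF_smul_right (v : VF3) (c : ℝ) (g : Poly3) :
    applyVF v (c • g) = c • applyVF v g := by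
  simp [applyVF, Finset.smul_sum, mul_smul_comm]

lemma applyVF_sum_right {ι : Type*} (v : VF3) (s : Finset ι) (g : ι → Poly3) :
    applyVF v (∑ p ∈ s, g p) = ∑ p ∈ s, applyVF v (g p) := by
  simp [applyVF, Finset.mul_sum]
  exact Finset.sum_comm

lemma applyVF_add_right (v : VF3) (p q : Poly3) :
    applyVF v (p + q) = applyVF v p + applyVF v q := by
  simp [applyVF, mul_add, Finset.sum_add_distrib]

lemma applyVF_mul (v : VF3) (p q : Poly3) :
    applyVF v (p * q) = applyVF v p * q + p * applyVF v q := by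
  simp only [applyVF, pderiv_mul, mul_add, Finset.sum_add_distrib]
  congr 1
  · rw [Finset.sum_mul]; apply Finset.sum_congr rfl; intros; ring
  · rw [Finset.mul_sum]; apply Finset.sum_congr rfl; intros; ring

lemma applyVF_mul_left (g : Poly3) (w : VF3) (p : Poly3) :
    applyVF (fun i => g * w i) p = g * applyVF w p := by
  simp [applyVF, Finset.mul_sum, mul_assoc]

/-- if `v` is a finite real linear combination of the `F^l_k` (`−1 ≤ l ≤ k`)
and `Θ^m_n` (`0 ≤ m ≤ n`) and `g` satisfies `v(g) = 0`, then `g·Θ^0_0` is a symmetry of `v`: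
`[v, g·Θ^0_0] = 0`. In particular, if `f` is a first integral of `v` then so is every power
`f^l`, and `[v, f^l Θ^0_0] = 0` for all `l ≥ 0`. -/
theorem symmetry_of_first_integral_times_rotation
    (SF ST : Finset (ℤ × ℤ)) (a b : ℤ × ℤ → ℝ)
    (hSF : ∀ p ∈ SF, -1 ≤ p.1 ∧ p.1 ≤ p.2) (hST : ∀ p ∈ ST, 0 ≤ p.1 ∧ p.1 ≤ p.2)
    (v : VF3)
    (hv : v = fun i => ∑ p ∈ SF, a p • Fvf p.1 p.2 i + ∑ p ∈ ST, b p • Tvf p.1 p.2 i) :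
    (∀ g : Poly3, applyVF v g = 0 → bracket v (fun i => g * Tvf 0 0 i) = 0) ∧
    ∀ f : Poly3, applyVF v f = 0 → ∀ l : ℕ,
      applyVF v (f ^ l) = 0 ∧ bracket v (fun i => f ^ l * Tvf 0 0 i) = 0 := by
  -- the key fact: v commutes with the rotation Θ⁰₀
  have key : bracket v (Tvf 0 0) = 0 := by
    funext i
    have h1 : applyVF v (Tvf 0 0 i) =
        ∑ p ∈ SF, a p • applyVF (Fvf p.1 p.2) (Tvf 0 0 i)
          + ∑ p ∈ ST, b p • applyVF (Tvf p.1 p.2) (Tvf 0 0 i) := by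
      rw [hv]
      rw [applyVF_add_left (fun i => ∑ p ∈ SF, a p • Fvf p.1 p.2 i)
        (fun i => ∑ p ∈ ST, b p • Tvf p.1 p.2 i), applyVF_sum_smul, applyVF_sum_smul]
    have h2 : applyVF (Tvf 0 0) (v i) =
        ∑ p ∈ SF, a p • applyVF (Tvf 0 0) (Fvf p.1 p.2 i)
          + ∑ p ∈ ST, b p • applyVF (Tvf 0 0) (Tvf p.1 p.2 i) := by
      rw [hv]
      show applyVF (Tvf 0 0) (∑ p ∈ SF, a p • Fvf p.1 p.2 i + ∑ p ∈ ST, b p • Tvf p.1 p.2 i) = _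
      rw [applyVF_add_right, applyVF_sum_right, applyVF_sum_right]
      simp [applyVF_smul_right]
    show applyVF v (Tvf 0 0 i) - applyVF (Tvf 0 0) (v i) = 0
    rw [h1, h2]
    have hF : ∀ p ∈ SF, a p • applyVF (Fvf p.1 p.2) (Tvf 0 0 i)
        - a p • applyVF (Tvf 0 0) (Fvf p.1 p.2 i) = 0 := by
      intro p _
      rw [← smul_sub]
      have := congrFun (brF p.1 p.2) i
      simp only [bracket, Pi.zero_apply] at this
      rw [this]; simp
    have hT : ∀ p ∈ ST, b p • applyVF (Tvf p.1 p.2) (Tvf 0 0 i)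
        - b p • applyVF (Tvf 0 0) (Tvf p.1 p.2 i) = 0 := by
      intro p _
      rw [← smul_sub]
      have := congrFun (brT p.1 p.2) i
      simp only [bracket, Pi.zero_apply] at this
      rw [this]; simp
    have : (∑ p ∈ SF, (a p • applyVF (Fvf p.1 p.2) (Tvf 0 0 i)
        - a p • applyVF (Tvf 0 0) (Fvf p.1 p.2 i)))
        + (∑ p ∈ ST, (b p • applyVF (Tvf p.1 p.2) (Tvf 0 0 i)
        - b p • applyVF (Tvf 0 0) (Tvf p.1 p.2 i))) = 0 := by
      rw [Finset.sum_eq_zero hF, Finset.sum_eq_zero hT, add_zero]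
    rw [Finset.sum_sub_distrib, Finset.sum_sub_distrib] at this
    linear_combination this
  have main : ∀ g : Poly3, applyVF v g = 0 →
      bracket v (fun i => g * Tvf 0 0 i) = 0 := by
    intro g hg
    funext i
    show applyVF v (g * Tvf 0 0 i) - applyVF (fun j => g * Tvf 0 0 j) (v i) = 0
    rw [applyVF_mul, hg, applyVF_mul_left]
    have := congrFun key i
    simp only [bracket, Pi.zero_apply] at this
    have hsub : applyVF v (Tvf 0 0 i) = applyVF (Tvf 0 0) (v i) := by
      linear_combination this
    rw [hsub]
    ring
  refine ⟨main, fun f hf l => ?_⟩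
  have hpow : applyVF v (f ^ l) = 0 := by
    induction l with
    | zero => simp [applyVF]
    | succ n ih => rw [pow_succ, applyVF_mul, ih, hf]; ring
  exact ⟨hpow, main _ hpow⟩
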